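/- arXiv:2111.12909 — 3 statements merged into one kernel-verified Lean document; each statement's English description precedes it below -/
import Mathlib

section
/- Let ρ be a density operator on a finite-dimensional Hilbert space H_A ⊗ H_B ⊗ H_C and suppose that for all Hermitian operators A_i, B_j, C_k (i,j,k ∈ {0,1}) with operator norm at most 1 we have |tr((A_i ⊗ B_j ⊗ C_k)ρ) − tr((A_i ⊗ I ⊗ I)ρ)·tr((I ⊗ B_j ⊗ C_k)ρ)| ≤ δ. Then the Svetlichny quantity S = ⟨A₀B₀C₀⟩ + ⟨A₁B₀C₀⟩ + ⟨A₀B₁C₀⟩ + ⟨A₀B₀C₁⟩ − ⟨A₀B₁C₁⟩ − ⟨A₁B₁C₀⟩ − ⟨A₁B₀C₁⟩ − ⟨A₁B₁C₁⟩ satisfies S ≤ 4 + 8δ, where ⟨A_iB_jC_k⟩ = tr((A_i ⊗ B_j ⊗ C_k)ρ). -/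
open scoped Matrix.Norms.L2Operator Kronecker ComplexOrder

/-!
Write `aᵢ = ⟨Aᵢ⟩` and `bⱼₖ = ⟨BⱼCₖ⟩`. The clustering hypothesis replaces each of the eight
correlators `⟨AᵢBⱼCₖ⟩` in `S` by the product `aᵢ bⱼₖ` at a cost of at most `δ`, and the
factorized quantity `a₀ (b₀₀ + b₁₀ + b₀₁ - b₁₁) + a₁ (b₀₀ - b₁₀ - b₀₁ - b₁₁)` is at most `4`
because all the `aᵢ` and `bⱼₖ` lie in `[-1, 1]`: a Hermitian contraction `X` satisfies
`-1 ≤ X ≤ 1`, this order interval is closed under Kronecker products, and `M ↦ tr (M ρ)` is a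
positive unital functional.
-/

open scoped MatrixOrder
open Set Matrix

lemma IsSelfAdjoint.mem_Icc_neg_one_one {A : Type*} [CStarAlgebra A] [PartialOrder A]
    [StarOrderedRing A] {a : A} (ha : IsSelfAdjoint a) (hna : ‖a‖ ≤ 1) : a ∈ Icc (-1) 1 := by
  have hnorm : algebraMap ℝ A ‖a‖ ≤ 1 := by
    simpa using algebraMap_mono A hna
  exact ⟨(neg_le_neg hnorm).trans ha.neg_algebraMap_norm_le_self,
    ha.le_algebraMap_norm_self.trans hnorm⟩

namespace Matrix

section Kronecker

variable {α l m n p : Type*} [Ring α]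

lemma sub_kronecker (A B : Matrix l m α) (C : Matrix n p α) :
    (A - B) ⊗ₖ C = A ⊗ₖ C - B ⊗ₖ C :=
  eq_sub_of_add_eq (by rw [← add_kronecker, sub_add_cancel])

lemma kronecker_sub (A : Matrix l m α) (B C : Matrix n p α) :
    A ⊗ₖ (B - C) = A ⊗ₖ B - A ⊗ₖ C :=
  eq_sub_of_add_eq (by rw [← kronecker_add, sub_add_cancel])

end Kronecker

variable {𝕜 m n : Type*} [RCLike 𝕜] [Fintype m] [Fintype n] [DecidableEq m] [DecidableEq n]

lemma one_mem_Icc_neg_one_one : (1 : Matrix n n 𝕜) ∈ Icc (-1) 1 :=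
  ⟨neg_le_self zero_le_one, le_rfl⟩

lemma kronecker_mem_Icc_neg_one_one {X : Matrix m m 𝕜} {Y : Matrix n n 𝕜}
    (hX : X ∈ Icc (-1) 1) (hY : Y ∈ Icc (-1) 1) : X ⊗ₖ Y ∈ Icc (-1) 1 := by
  simp only [mem_Icc, le_iff, sub_neg_eq_add] at hX hY ⊢
  obtain ⟨hX₁, hX₂⟩ := hX
  obtain ⟨hY₁, hY₂⟩ := hY
  -- `2 (1 ± X ⊗ Y) = (1 + X) ⊗ (1 ± Y) + (1 - X) ⊗ (1 ∓ Y)`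
  constructor
  · convert ((hX₁.kronecker hY₁).add (hX₂.kronecker hY₂)).smul (a := (2⁻¹ : ℝ)) (by norm_num)
      using 1
    simp only [sub_kronecker, kronecker_sub, add_kronecker, kronecker_add, one_kronecker_one]
    module
  · convert ((hX₁.kronecker hY₂).add (hX₂.kronecker hY₁)).smul (a := (2⁻¹ : ℝ)) (by norm_num)
      using 1
    simp only [sub_kronecker, kronecker_sub, add_kronecker, kronecker_add, one_kronecker_one]
    module

lemma trace_mul_nonneg {P ρ : Matrix n n 𝕜} (hP : 0 ≤ P) (hρ : 0 ≤ ρ) :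
    0 ≤ (P * ρ).trace := by
  obtain ⟨B, rfl⟩ := CStarAlgebra.nonneg_iff_eq_star_mul_self.mp hP
  rw [Matrix.mul_assoc, trace_mul_comm]
  exact ((nonneg_iff_posSemidef.mp hρ).mul_mul_conjTranspose_same B).trace_nonneg

lemma re_trace_mul_mono {ρ P Q : Matrix n n 𝕜} (hρ : ρ.PosSemidef) (hPQ : P ≤ Q) :
    RCLike.re (P * ρ).trace ≤ RCLike.re (Q * ρ).trace := by
  have h := trace_mul_nonneg (sub_nonneg.mpr hPQ) hρ.nonneg
  rw [sub_mul, trace_sub, sub_nonneg] at h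
  exact RCLike.re_le_re h

lemma re_trace_mul_mem_Icc_neg_one_one {ρ M : Matrix n n 𝕜} (hρ : ρ.PosSemidef)
    (hρtr : ρ.trace = 1) (hM : M ∈ Icc (-1) 1) : RCLike.re (M * ρ).trace ∈ Icc (-1) 1 := by
  have hlow := re_trace_mul_mono hρ hM.1
  have hupp := re_trace_mul_mono hρ hM.2
  simp only [neg_mul, one_mul, trace_neg, map_neg, hρtr, RCLike.one_re] at hlow hupp
  exact ⟨hlow, hupp⟩

end Matrix

lemma abs_add_abs_le_four {b₀₀ b₀₁ b₁₀ b₁₁ : ℝ} (h₀₀ : b₀₀ ∈ Icc (-1) 1)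
    (h₀₁ : b₀₁ ∈ Icc (-1) 1) (h₁₀ : b₁₀ ∈ Icc (-1) 1) (h₁₁ : b₁₁ ∈ Icc (-1) 1) :
    |b₀₀ + b₁₀ + b₀₁ - b₁₁| + |b₀₀ - b₁₀ - b₀₁ - b₁₁| ≤ 4 := by
  rw [mem_Icc] at h₀₀ h₀₁ h₁₀ h₁₁
  rcases abs_cases (b₀₀ + b₁₀ + b₀₁ - b₁₁) with ⟨h, -⟩ | ⟨h, -⟩ <;>
    rcases abs_cases (b₀₀ - b₁₀ - b₀₁ - b₁₁) with ⟨h', -⟩ | ⟨h', -⟩ <;>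
    linarith

lemma mul_le_abs_of_mem_Icc {a x : ℝ} (ha : a ∈ Icc (-1) 1) : a * x ≤ |x| :=
  calc a * x ≤ |a| * |x| := by rw [← abs_mul]; exact le_abs_self _
    _ ≤ |x| := mul_le_of_le_one_left (abs_nonneg x) (abs_le.mpr ha)

lemma svetlichny_factorized_le_four {a₀ a₁ b₀₀ b₀₁ b₁₀ b₁₁ : ℝ} (ha₀ : a₀ ∈ Icc (-1) 1)
    (ha₁ : a₁ ∈ Icc (-1) 1) (h₀₀ : b₀₀ ∈ Icc (-1) 1) (h₀₁ : b₀₁ ∈ Icc (-1) 1)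
    (h₁₀ : b₁₀ ∈ Icc (-1) 1) (h₁₁ : b₁₁ ∈ Icc (-1) 1) :
    a₀ * (b₀₀ + b₁₀ + b₀₁ - b₁₁) + a₁ * (b₀₀ - b₁₀ - b₀₁ - b₁₁) ≤ 4 := by
  linarith [mul_le_abs_of_mem_Icc (x := b₀₀ + b₁₀ + b₀₁ - b₁₁) ha₀,
    mul_le_abs_of_mem_Icc (x := b₀₀ - b₁₀ - b₀₁ - b₁₁) ha₁, abs_add_abs_le_four h₀₀ h₀₁ h₁₀ h₁₁]

/-- If every triple of Hermitian norm-one-bounded observables satisfies the clustering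
bound `|⟨A⊗B⊗C⟩ − ⟨A⟩⟨B⊗C⟩| ≤ δ` on the state `ρ`, then the Svetlichny quantity
satisfies `S ≤ 4 + 8δ`. -/
theorem stmt_0 {dA dB dC : Type*} [Fintype dA] [Fintype dB] [Fintype dC]
    [DecidableEq dA] [DecidableEq dB] [DecidableEq dC]
    (ρ : Matrix ((dA × dB) × dC) ((dA × dB) × dC) ℂ)
    (hρ : ρ.PosSemidef) (hρtr : ρ.trace = 1) (δ : ℝ)
    (hcl : ∀ (A : Matrix dA dA ℂ) (B : Matrix dB dB ℂ) (C : Matrix dC dC ℂ),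
      A.IsHermitian → B.IsHermitian → C.IsHermitian →
      ‖A‖ ≤ 1 → ‖B‖ ≤ 1 → ‖C‖ ≤ 1 →
      |(((A ⊗ₖ B ⊗ₖ C) * ρ).trace).re -
        (((A ⊗ₖ (1 : Matrix dB dB ℂ) ⊗ₖ (1 : Matrix dC dC ℂ)) * ρ).trace).re *
          ((((1 : Matrix dA dA ℂ) ⊗ₖ B ⊗ₖ C) * ρ).trace).re| ≤ δ)
    (A : Fin 2 → Matrix dA dA ℂ) (B : Fin 2 → Matrix dB dB ℂ) (C : Fin 2 → Matrix dC dC ℂ)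
    (hA : ∀ i, (A i).IsHermitian) (hB : ∀ j, (B j).IsHermitian) (hC : ∀ k, (C k).IsHermitian)
    (hAn : ∀ i, ‖A i‖ ≤ 1) (hBn : ∀ j, ‖B j‖ ≤ 1) (hCn : ∀ k, ‖C k‖ ≤ 1) :
    (((A 0 ⊗ₖ B 0 ⊗ₖ C 0) * ρ).trace).re + (((A 1 ⊗ₖ B 0 ⊗ₖ C 0) * ρ).trace).re +
      (((A 0 ⊗ₖ B 1 ⊗ₖ C 0) * ρ).trace).re + (((A 0 ⊗ₖ B 0 ⊗ₖ C 1) * ρ).trace).re -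
      (((A 0 ⊗ₖ B 1 ⊗ₖ C 1) * ρ).trace).re - (((A 1 ⊗ₖ B 1 ⊗ₖ C 0) * ρ).trace).re -
      (((A 1 ⊗ₖ B 0 ⊗ₖ C 1) * ρ).trace).re - (((A 1 ⊗ₖ B 1 ⊗ₖ C 1) * ρ).trace).re ≤
    4 + 8 * δ := by
  have ha : ∀ i, (((A i ⊗ₖ (1 : Matrix dB dB ℂ) ⊗ₖ (1 : Matrix dC dC ℂ)) * ρ).trace).re ∈
      Icc (-1) 1 := fun i ↦ re_trace_mul_mem_Icc_neg_one_one hρ hρtr <|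
    kronecker_mem_Icc_neg_one_one (kronecker_mem_Icc_neg_one_one
      ((hA i).isSelfAdjoint.mem_Icc_neg_one_one (hAn i)) one_mem_Icc_neg_one_one)
      one_mem_Icc_neg_one_one
  have hb : ∀ j k, ((((1 : Matrix dA dA ℂ) ⊗ₖ B j ⊗ₖ C k) * ρ).trace).re ∈ Icc (-1) 1 :=
    fun j k ↦ re_trace_mul_mem_Icc_neg_one_one hρ hρtr <|
      kronecker_mem_Icc_neg_one_one (kronecker_mem_Icc_neg_one_one one_mem_Icc_neg_one_one
        ((hB j).isSelfAdjoint.mem_Icc_neg_one_one (hBn j)))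
        ((hC k).isSelfAdjoint.mem_Icc_neg_one_one (hCn k))
  have hclust := fun i j k ↦ abs_le.mp <|
    hcl (A i) (B j) (C k) (hA i) (hB j) (hC k) (hAn i) (hBn j) (hCn k)
  linarith [svetlichny_factorized_le_four (ha 0) (ha 1) (hb 0 0) (hb 0 1) (hb 1 0) (hb 1 1),
    (hclust 0 0 0).2, (hclust 1 0 0).2, (hclust 0 1 0).2, (hclust 0 0 1).2,
    (hclust 0 1 1).1, (hclust 1 1 0).1, (hclust 1 0 1).1, (hclust 1 1 1).1]
end

section
/- Let ρ be a density operator on H₁ ⊗ ⋯ ⊗ H_n (finite dimensional), and for each party i let {E^{(i)}_{k}} be observables with ‖E^{(i)}_k‖ ≤ 1. Suppose a Bell functional S(ρ) = Σ_s Σ_{i₁≠⋯≠i_s} Σ_{k₁,…,k_s} ψ^{(i₁⋯i_s)}_{k₁⋯k_s} ⟨E^{(i₁)}_{k₁}⋯E^{(i_s)}_{k_s}⟩_ρ satisfies the bound S ≤ Δ whenever each correlator ⟨E^{(i₁)}_{k₁}⋯E^{(i_s)}_{k_s}⟩ is replaced by the factorized expression ⟨E^{(i₁)}_{k₁}⟩⋯⟨E^{(i_{s−2})}_{k_{s−2}}⟩⟨E^{(i_{s−1})}_{k_{s−1}}E^{(i_s)}_{k_s}⟩.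 If additionally |⟨E^{(i₁)}_{k₁}⋯E^{(i_s)}_{k_s}⟩ − ⟨E^{(i₁)}_{k₁}⟩⋯⟨E^{(i_{s−2})}_{k_{s−2}}⟩⟨E^{(i_{s−1})}_{k_{s−1}}E^{(i_s)}_{k_s}⟩| ≤ (s−2)δ for all terms, then S(ρ) ≤ Δ + γδ where γ = Σ (s−2)|ψ^{(i₁⋯i_s)}_{k₁⋯k_s}|. -/
section

variable {ι R : Type*} [Ring R] [LinearOrder R] [IsOrderedRing R]

theorem mul_le_mul_add_abs_mul_of_abs_sub_le {a b c e : R} (h : |b - c| ≤ e) :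
    a * b ≤ a * c + |a| * e :=
  calc a * b = a * c + a * (b - c) := by noncomm_ring
    _ ≤ a * c + |a| * |b - c| := by rw [← abs_mul]; gcongr; exact le_abs_self _
    _ ≤ a * c + |a| * e := by gcongr

theorem Finset.sum_mul_le_sum_mul_add_sum_abs_mul (u : Finset ι) (ψ F G e : ι → R)
    (h : ∀ t ∈ u, |F t - G t| ≤ e t) :
    ∑ t ∈ u, ψ t * F t ≤ ∑ t ∈ u, ψ t * G t + ∑ t ∈ u, |ψ t| * e t := by
  rw [← Finset.sum_add_distrib]
  exact Finset.sum_le_sum fun t ht => mul_le_mul_add_abs_mul_of_abs_sub_le (h t ht)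

end

theorem stmt_4_general {ι : Type*} [Fintype ι] (ψ F G : ι → ℝ) (s : ι → ℕ) (δ Δ : ℝ)
    (hfact : ∑ t, ψ t * G t ≤ Δ)
    (hcl : ∀ t, |F t - G t| ≤ ((s t - 2 : ℕ) : ℝ) * δ) :
    ∑ t, ψ t * F t ≤ Δ + (∑ t, ((s t - 2 : ℕ) : ℝ) * |ψ t|) * δ :=
  calc ∑ t, ψ t * F t
      ≤ ∑ t, ψ t * G t + ∑ t, |ψ t| * (((s t - 2 : ℕ) : ℝ) * δ) :=
        Finset.univ.sum_mul_le_sum_mul_add_sum_abs_mul ψ F G _ fun t _ => hcl t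
    _ = ∑ t, ψ t * G t + (∑ t, ((s t - 2 : ℕ) : ℝ) * |ψ t|) * δ := by
        rw [Finset.sum_mul]; congr 1; exact Finset.sum_congr rfl fun t _ => by ring
    _ ≤ Δ + (∑ t, ((s t - 2 : ℕ) : ℝ) * |ψ t|) * δ := by gcongr

/-- Core estimate of Theorem 2: a linear Bell expression `S = Σ_t ψ t · F t` whose
factorized version `Σ_t ψ t · G t` is bounded by the biseparable bound `Δ`, and whose
terms satisfy the clustering estimate `|F t − G t| ≤ (s t − 2)·δ` (where `s t` is the
number of parties in term `t`), satisfies `S ≤ Δ + γ·δ` with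
`γ = Σ_t (s t − 2)·|ψ t|`. -/
theorem stmt_4 {ι : Type*} [Fintype ι] (ψ F G : ι → ℝ) (s : ι → ℕ) (δ Δ : ℝ)
    (hδ : 0 < δ)
    (hF : ∀ t, |F t| ≤ 1) (hG : ∀ t, |G t| ≤ 1)
    (hfact : ∑ t, ψ t * G t ≤ Δ)
    (hcl : ∀ t, |F t - G t| ≤ ((s t - 2 : ℕ) : ℝ) * δ) :
    ∑ t, ψ t * F t ≤ Δ + (∑ t, ((s t - 2 : ℕ) : ℝ) * |ψ t|) * δ :=
  stmt_4_general ψ F G s δ Δ hfact hcl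
end

section
/- Let ρ be a density operator on H₁ ⊗ ⋯ ⊗ H_n with observables E^{(i)}_{k_i} of norm ≤ 1, and suppose the bipartite clustering condition |⟨E^{(i₁)}_{k₁}⋯E^{(i_s)}_{k_s}⟩ − ⟨E^{(i₁)}_{k₁}⋯E^{(i_m)}_{k_m}⟩·⟨E^{(i_{m+1})}_{k_{m+1}}⋯E^{(i_s)}_{k_s}⟩| ≤ δ holds for every term appearing in a Bell expression S with coefficients ψ. If the factorized Bell expression is bounded by Δ (the biseparable bound), then S(ρ) ≤ Δ + γ̂·δ where γ̂ = Σ|ψ| is the sum of absolute values of all coefficients. -/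
/-- Theorem 3/6 (bipartite-clustering version): with a single bipartite split per term of
error `δ`, the Bell value exceeds the biseparable bound `Δ` by at most `γ̂·δ`, where
`γ̂ = Σ_t |ψ t|`. -/
theorem stmt_14 {ι : Type*} [Fintype ι] (ψ F G₁ G₂ : ι → ℝ) (δ Δ : ℝ)
    (hF : ∀ t, |F t| ≤ 1) (hG₁ : ∀ t, |G₁ t| ≤ 1) (hG₂ : ∀ t, |G₂ t| ≤ 1)
    (hcl : ∀ t, |F t - G₁ t * G₂ t| ≤ δ)
    (hfact : ∑ t, ψ t * (G₁ t * G₂ t) ≤ Δ) :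
    ∑ t, ψ t * F t ≤ Δ + (∑ t, |ψ t|) * δ := by
  have key : ∑ t, ψ t * F t ≤ ∑ t, ψ t * (G₁ t * G₂ t) + ∑ t, |ψ t| * δ := by
    rw [← Finset.sum_add_distrib]
    apply Finset.sum_le_sum
    intro t _
    have h := hcl t
    have : ψ t * F t - ψ t * (G₁ t * G₂ t) ≤ |ψ t| * δ := by
      calc ψ t * F t - ψ t * (G₁ t * G₂ t) = ψ t * (F t - G₁ t * G₂ t) := by ring
        _ ≤ |ψ t * (F t - G₁ t * G₂ t)| := le_abs_self _
        _ = |ψ t| * |F t - G₁ t * G₂ t| := abs_mul _ _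
        _ ≤ |ψ t| * δ := by
            exact mul_le_mul_of_nonneg_left h (abs_nonneg _)
    linarith
  calc ∑ t, ψ t * F t ≤ ∑ t, ψ t * (G₁ t * G₂ t) + ∑ t, |ψ t| * δ := key
    _ ≤ Δ + (∑ t, |ψ t|) * δ := by rw [← Finset.sum_mul]; linarith
end
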